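/- Let G be a finite graph of genus g = |E| − |V| + c, let 𝒢 ⊆ k^𝔼 be its cycle space (the residue space for the trivial partition), and γ(I) = dim_k proj_I(𝒢) for I ⊆ V, where proj_I projects onto the coordinates of arrows with tail in I. Then γ(I) = g − g(I^c), where g(I^c) is the genus (first Betti number) of the induced subgraph G[V \ I]. -/
import Mathlib


attribute [local instance] Classical.propDecidable

open Finset

variable {V E : Type*} [Fintype V] [Fintype E]

/-- The tail of an arrow: the edge `e` with endpoints `ends e = (u, w)` gives the two
arrows `(e, false) : u → w` and `(e, true) : w → u`. -/
def tl (ends : E → V × V) (a : E × Bool) : V :=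
  if a.2 then (ends a.1).2 else (ends a.1).1

/-- The reversal of an arrow. -/
def rev {E : Type*} (a : E × Bool) : E × Bool := (a.1, !a.2)

/-- The head of an arrow. -/
def hd (ends : E → V × V) (a : E × Bool) : V := tl ends (rev a)

/-- The space `Υ_π` of functions on arrows vanishing on all downward arrows
(arrows `u → v` with `h u < h v`). -/
noncomputable def Ups (k : Type*) [Field k] (ends : E → V × V) (h : V → ℕ) :
    Submodule k ((E × Bool) → k) :=
  ⨅ a ∈ {a : E × Bool | h (tl ends a) < h (hd ends a)},
    LinearMap.ker (LinearMap.proj (R := k) (φ := fun _ : E × Bool => k) a)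

/-- The linear functional `ψ ↦ Σ_{a ∈ 𝔼_v} ψ_a` summing the coordinates over the arrows
with tail `v`. -/
noncomputable def locF (k : Type*) [Field k] (ends : E → V × V) (v : V) :
    ((E × Bool) → k) →ₗ[k] k :=
  ∑ a ∈ Finset.univ.filter fun a : E × Bool => tl ends a = v,
    LinearMap.proj (R := k) (φ := fun _ : E × Bool => k) a

/-- The space `Υ⁰_π`: vanishing on downward arrows together with the local residue
conditions at every vertex. -/
noncomputable def Ups0 (k : Type*) [Field k] (ends : E → V × V) (h : V → ℕ) :
    Submodule k ((E × Bool) → k) :=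
  Ups k ends h ⊓ ⨅ v : V, LinearMap.ker (locF k ends v)

/-- The underlying adjacency graph of the multigraph `(V, E, ends)`. -/
def adjG (ends : E → V × V) : SimpleGraph V :=
  SimpleGraph.fromRel fun u w => ∃ e, ends e = (u, w)

/-- The cycle space of the graph: `Σ_{a ∈ 𝔼_v} ψ_a = 0` at every vertex and
`ψ_a + ψ_{ā} = 0` for every arrow. -/
noncomputable def CycSpace (k : Type*) [Field k] (ends : E → V × V) :
    Submodule k ((E × Bool) → k) :=
  (⨅ v : V, LinearMap.ker (locF k ends v)) ⊓
    ⨅ a : E × Bool,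
      LinearMap.ker (LinearMap.proj (R := k) (φ := fun _ : E × Bool => k) a +
        LinearMap.proj (R := k) (φ := fun _ : E × Bool => k) (rev a))

/-- The projection killing the coordinates of the arrows whose tail is outside `I`. -/
noncomputable def projTail (k : Type*) [Field k] (ends : E → V × V) (I : Set V) :
    ((E × Bool) → k) →ₗ[k] ((E × Bool) → k) :=
  LinearMap.pi fun a =>
    if tl ends a ∈ I then LinearMap.proj (R := k) (φ := fun _ : E × Bool => k) a else 0

section BND
variable (k : Type*) [Field k] (ends : E → V × V)

noncomputable def bnd : (E → k) →ₗ[k] (V → k) where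
  toFun φ v := ∑ e, φ e * ((if (ends e).1 = v then (1:k) else 0) - (if (ends e).2 = v then 1 else 0))
  map_add' x y := by
    funext v
    simp only [Pi.add_apply, add_mul, Finset.sum_add_distrib]
  map_smul' c x := by
    funext v
    simp only [Pi.smul_apply, smul_eq_mul, RingHom.id_apply, Finset.mul_sum, mul_assoc]

@[simp] lemma bnd_apply (φ : E → k) (v : V) :
    bnd k ends φ v = ∑ e, φ e * ((if (ends e).1 = v then (1:k) else 0) - (if (ends e).2 = v then 1 else 0)) := rfl

noncomputable def emb : (E → k) →ₗ[k] ((E × Bool) → k) where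
  toFun φ a := if a.2 then -φ a.1 else φ a.1
  map_add' x y := by funext a; obtain ⟨e, b⟩ := a; cases b <;> simp <;> ring
  map_smul' c x := by funext a; obtain ⟨e, b⟩ := a; cases b <;> simp

@[simp] lemma emb_apply (φ : E → k) (a : E × Bool) :
    emb k φ a = if a.2 then -φ a.1 else φ a.1 := rfl

lemma emb_inj : Function.Injective (emb k (E := E)) := by
  intro x y h
  funext e
  have := congrFun h (e, false)
  simpa using this

lemma locF_apply (v : V) (ψ : (E × Bool) → k) :
    locF k ends v ψ = ∑ a ∈ Finset.univ.filter fun a : E × Bool => tl ends a = v, ψ a := by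
  simp [locF, LinearMap.sum_apply]

lemma locF_emb (φ : E → k) (v : V) : locF k ends v (emb k φ) = bnd k ends φ v := by
  rw [locF_apply, Finset.sum_filter, Fintype.sum_prod_type]
  rw [bnd_apply]
  apply Finset.sum_congr rfl
  intro e _
  rw [Fintype.sum_bool]
  simp only [tl, emb_apply]
  simp only [ite_true, ite_false, Bool.false_eq_true, if_false, if_true]
  split_ifs <;> ring

lemma mem_CycSpace_iff (ψ : (E × Bool) → k) :
    ψ ∈ CycSpace k ends ↔ (∀ v, locF k ends v ψ = 0) ∧ ∀ a, ψ a + ψ (rev a) = 0 := by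
  simp [CycSpace, Submodule.mem_inf, Submodule.mem_iInf, LinearMap.mem_ker, LinearMap.add_apply]

lemma cyc_eq_map : CycSpace k ends = (LinearMap.ker (bnd k ends)).map (emb k) := by
  ext ψ
  rw [mem_CycSpace_iff]
  constructor
  · rintro ⟨h1, h2⟩
    have hψ : emb k (fun e => ψ (e, false)) = ψ := by
      funext a
      obtain ⟨e, b⟩ := a
      cases b
      · simp
      · have := h2 (e, false)
        simp only [rev, Bool.not_false] at this
        show -ψ (e, false) = ψ (e, true)
        linear_combination -this
    refine ⟨fun e => ψ (e, false), ?_, hψ⟩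
    rw [SetLike.mem_coe, LinearMap.mem_ker]
    funext v
    rw [Pi.zero_apply, ← locF_emb, hψ, h1 v]
  · rintro ⟨φ, hφ, rfl⟩
    rw [SetLike.mem_coe, LinearMap.mem_ker] at hφ
    constructor
    · intro v
      rw [locF_emb, hφ]
      rfl
    · intro a
      obtain ⟨e, b⟩ := a
      cases b <;> simp [rev]

end BND

section COMP
variable (k : Type*) [Field k] (ends : E → V × V)

noncomputable def csum : (V → k) →ₗ[k] ((adjG ends).ConnectedComponent → k) where
  toFun f c := ∑ v ∈ Finset.univ.filter fun v => (adjG ends).connectedComponentMk v = c, f v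
  map_add' x y := by funext c; simp [Finset.sum_add_distrib]
  map_smul' c x := by funext d; simp [Finset.mul_sum]

@[simp] lemma csum_apply (f : V → k) (c : (adjG ends).ConnectedComponent) :
    csum k ends f c = ∑ v ∈ Finset.univ.filter fun v => (adjG ends).connectedComponentMk v = c, f v := rfl

lemma comp_ends (e : E) :
    (adjG ends).connectedComponentMk (ends e).1 = (adjG ends).connectedComponentMk (ends e).2 := by
  by_cases h : (ends e).1 = (ends e).2
  · rw [h]
  · exact SimpleGraph.ConnectedComponent.sound
      (SimpleGraph.Adj.reachable (by
        rw [adjG, SimpleGraph.fromRel_adj]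
        exact ⟨h, Or.inl ⟨e, by simp⟩⟩))

noncomputable def dd (u w : V) : V → k :=
  fun v => (if u = v then (1:k) else 0) - (if w = v then 1 else 0)

lemma bnd_single (e : E) : bnd k ends (Pi.single e 1) = dd k (ends e).1 (ends e).2 := by
  funext v
  rw [bnd_apply]
  rw [Finset.sum_eq_single_of_mem e (Finset.mem_univ e)]
  · simp [dd]
  · intro e' _ hne
    rw [Pi.single_eq_of_ne hne]
    ring

lemma mk_out {W : Type*} (G : SimpleGraph W) (c : G.ConnectedComponent) :
    G.connectedComponentMk c.out = c := Quot.out_eq c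

lemma dd_mem {u w : V} (h : (adjG ends).Reachable u w) :
    dd k u w ∈ LinearMap.range (bnd k ends) := by
  obtain ⟨p⟩ := h
  induction p with
  | nil => exact ⟨0, by rw [map_zero]; funext v; simp [dd]⟩
  | @cons u x w h p ih =>
    have hsplit : dd k u w = dd k u x + dd k x w := by
      funext v; simp only [dd, Pi.add_apply]; ring
    rw [hsplit]
    refine Submodule.add_mem _ ?_ ih
    rw [adjG, SimpleGraph.fromRel_adj] at h
    obtain ⟨hne, he | he⟩ := h
    · obtain ⟨e, he⟩ := he
      exact ⟨Pi.single e 1, by rw [bnd_single, he]⟩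
    · obtain ⟨e, he⟩ := he
      have : dd k u x = -dd k x u := by funext v; simp only [dd, Pi.neg_apply]; ring
      rw [this]
      refine Submodule.neg_mem _ ?_
      exact ⟨Pi.single e 1, by rw [bnd_single, he]⟩

lemma range_bnd : LinearMap.range (bnd k ends) = LinearMap.ker (csum k ends) := by
  apply le_antisymm
  · rintro _ ⟨φ, rfl⟩
    rw [LinearMap.mem_ker]
    funext c
    rw [Pi.zero_apply, csum_apply]
    simp only [bnd_apply]
    rw [Finset.sum_comm]
    apply Finset.sum_eq_zero
    intro e _
    rw [← Finset.mul_sum, Finset.sum_sub_distrib, Finset.sum_ite_eq, Finset.sum_ite_eq]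
    simp [Finset.mem_filter, comp_ends ends e]
  · intro f hf
    rw [LinearMap.mem_ker] at hf
    have h2 : ∀ w, ∑ v : V, f v *
        (if ((adjG ends).connectedComponentMk v).out = w then (1:k) else 0) = 0 := by
      intro w
      rw [← Finset.sum_fiberwise Finset.univ (fun v => (adjG ends).connectedComponentMk v)
        (fun v => f v * (if ((adjG ends).connectedComponentMk v).out = w then (1:k) else 0))]
      apply Finset.sum_eq_zero
      intro c _
      rw [Finset.sum_congr rfl (fun v hv => by
        rw [(Finset.mem_filter.1 hv).2])]
      rw [← Finset.sum_mul]
      have hc : ∑ v ∈ Finset.univ.filter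
          (fun v => (adjG ends).connectedComponentMk v = c), f v = 0 := by
        have := congrFun hf c
        simpa using this
      rw [hc, zero_mul]
    have key : f = ∑ v : V, f v • dd k v ((adjG ends).connectedComponentMk v).out := by
      funext w
      rw [Finset.sum_apply]
      simp only [Pi.smul_apply, smul_eq_mul, dd, mul_sub]
      rw [Finset.sum_sub_distrib]
      have h1 : ∑ v : V, f v * (if v = w then (1:k) else 0) = f w := by
        simp [Finset.sum_ite_eq']
      rw [h1, h2 w, sub_zero]
    rw [key]
    refine Submodule.sum_mem _ fun v _ => Submodule.smul_mem _ _ (dd_mem k ends ?_)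
    apply SimpleGraph.ConnectedComponent.exact
    rw [mk_out]

lemma csum_surj : Function.Surjective (csum k ends) := by
  intro g
  refine ⟨fun v => if v = ((adjG ends).connectedComponentMk v).out
      then g ((adjG ends).connectedComponentMk v) else 0, ?_⟩
  funext c
  rw [csum_apply]
  rw [Finset.sum_eq_single_of_mem c.out
    (Finset.mem_filter.2 ⟨Finset.mem_univ _, mk_out (adjG ends) c⟩)]
  · rw [if_pos (by rw [mk_out]), mk_out]
  · intro v hv hne
    rw [if_neg]
    rw [(Finset.mem_filter.1 hv).2]
    exact fun h => hne h

end COMP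

lemma cyc_finrank (k : Type*) [Field k] (ends : E → V × V) :
    (Module.finrank k (CycSpace k ends) : ℤ) =
      (Fintype.card E : ℤ) - (Fintype.card V : ℤ) +
        (Nat.card (adjG ends).ConnectedComponent : ℤ) := by
  classical
  letI : Fintype (adjG ends).ConnectedComponent :=
    Fintype.ofSurjective (adjG ends).connectedComponentMk fun c => ⟨c.out, mk_out _ c⟩
  have h1 : Module.finrank k (CycSpace k ends) =
      Module.finrank k (LinearMap.ker (bnd k ends)) := by
    rw [cyc_eq_map]
    exact ((Submodule.equivMapOfInjective _ (emb_inj k) _).finrank_eq).symm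
  have h2 : Module.finrank k (LinearMap.range (bnd k ends)) +
      Module.finrank k (LinearMap.ker (bnd k ends)) = Fintype.card E := by
    rw [LinearMap.finrank_range_add_finrank_ker, Module.finrank_fintype_fun_eq_card]
  have h4 : Module.finrank k (LinearMap.range (csum k ends)) +
      Module.finrank k (LinearMap.ker (csum k ends)) = Fintype.card V := by
    rw [LinearMap.finrank_range_add_finrank_ker, Module.finrank_fintype_fun_eq_card]
  have h5 : Module.finrank k (LinearMap.range (csum k ends)) =
      Nat.card (adjG ends).ConnectedComponent := by
    rw [LinearMap.range_eq_top.2 (csum_surj k ends), finrank_top,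
      Module.finrank_fintype_fun_eq_card, Nat.card_eq_fintype_card]
  have h3 := range_bnd k ends
  rw [h1]
  rw [h3] at h2
  omega

section SUB
variable (k : Type*) [Field k] (ends : E → V × V) (I : Set V)

@[simp] lemma rev_mk {E : Type*} (e : E) (b : Bool) : rev (e, b) = (e, !b) := rfl

lemma projTail_apply (ψ : (E × Bool) → k) (a : E × Bool) :
    projTail k ends I ψ a = if tl ends a ∈ I then ψ a else 0 := by
  simp only [projTail, LinearMap.pi_apply]
  split_ifs <;> simp

def subEnds : {e : E // (ends e).1 ∈ Iᶜ ∧ (ends e).2 ∈ Iᶜ} → ↥Iᶜ × ↥Iᶜ :=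
  fun e => (⟨(ends e.1).1, e.2.1⟩, ⟨(ends e.1).2, e.2.2⟩)

noncomputable def Psi :
    (({e : E // (ends e).1 ∈ Iᶜ ∧ (ends e).2 ∈ Iᶜ} × Bool) → k) →ₗ[k] ((E × Bool) → k) where
  toFun ψ a := if h : (ends a.1).1 ∈ Iᶜ ∧ (ends a.1).2 ∈ Iᶜ then ψ (⟨a.1, h⟩, a.2) else 0
  map_add' x y := by
    funext a
    by_cases h : (ends a.1).1 ∈ Iᶜ ∧ (ends a.1).2 ∈ Iᶜ
    · simp only [Pi.add_apply, dif_pos h]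
    · simp only [Pi.add_apply, dif_neg h, add_zero]
  map_smul' c x := by
    funext a
    by_cases h : (ends a.1).1 ∈ Iᶜ ∧ (ends a.1).2 ∈ Iᶜ
    · simp only [Pi.smul_apply, smul_eq_mul, RingHom.id_apply, dif_pos h]
    · simp only [Pi.smul_apply, smul_eq_mul, RingHom.id_apply, dif_neg h, mul_zero]

lemma Psi_apply (ψ) (a : E × Bool) :
    Psi k ends I ψ a =
      if h : (ends a.1).1 ∈ Iᶜ ∧ (ends a.1).2 ∈ Iᶜ then ψ (⟨a.1, h⟩, a.2) else 0 := rfl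

lemma Psi_inj : Function.Injective (Psi k ends I) := by
  intro x y h
  funext a'
  have := congrFun h (a'.1.1, a'.2)
  rw [Psi_apply, Psi_apply, dif_pos a'.1.2, dif_pos a'.1.2] at this
  simpa using this

lemma tl_sub (a : {e : E // (ends e).1 ∈ Iᶜ ∧ (ends e).2 ∈ Iᶜ} × Bool) :
    (tl (subEnds ends I) a).val = tl ends (a.1.1, a.2) := by
  obtain ⟨e', b⟩ := a
  cases b <;> rfl

lemma tl_good {e : E} (h : (ends e).1 ∈ Iᶜ ∧ (ends e).2 ∈ Iᶜ) (b : Bool) :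
    tl ends (e, b) ∈ Iᶜ := by
  cases b
  · exact h.1
  · exact h.2

lemma sum_good (F : (E × Bool) → k)
    (h0 : ∀ a : E × Bool, ¬((ends a.1).1 ∈ Iᶜ ∧ (ends a.1).2 ∈ Iᶜ) → F a = 0) :
    ∑ a : E × Bool, F a =
      ∑ a' : {e : E // (ends e).1 ∈ Iᶜ ∧ (ends e).2 ∈ Iᶜ} × Bool, F (a'.1.1, a'.2) := by
  classical
  rw [Fintype.sum_prod_type, Fintype.sum_prod_type]
  rw [← Finset.sum_subtype (Finset.univ.filter
      fun e : E => (ends e).1 ∈ Iᶜ ∧ (ends e).2 ∈ Iᶜ)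
    (fun e => by simp) (fun e => ∑ b, F (e, b))]
  rw [Finset.sum_filter]
  apply Finset.sum_congr rfl
  intro e _
  by_cases h : (ends e).1 ∈ Iᶜ ∧ (ends e).2 ∈ Iᶜ
  · rw [if_pos h]
  · rw [if_neg h]
    rw [Fintype.sum_bool, h0 (e, true) h, h0 (e, false) h, add_zero]

lemma locF_Psi {v : V} (hv : v ∈ Iᶜ) (ψ) :
    locF k ends v (Psi k ends I ψ) = locF k (subEnds ends I) ⟨v, hv⟩ ψ := by
  rw [locF_apply, locF_apply, Finset.sum_filter, Finset.sum_filter]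
  rw [sum_good k ends I _ (fun a ha => by rw [Psi_apply, dif_neg ha, ite_self])]
  apply Finset.sum_congr rfl
  intro a' _
  have hcond : (tl ends (a'.1.1, a'.2) = v) ↔ tl (subEnds ends I) a' = (⟨v, hv⟩ : ↥Iᶜ) := by
    rw [Subtype.ext_iff, tl_sub]
  rw [Psi_apply, dif_pos a'.1.2]
  by_cases hh : tl ends (a'.1.1, a'.2) = v
  · rw [if_pos hh, if_pos (hcond.1 hh)]
  · rw [if_neg hh, if_neg fun hc => hh (hcond.2 hc)]

lemma locF_Psi_zero {v : V} (hv : v ∈ I) (ψ) :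
    locF k ends v (Psi k ends I ψ) = 0 := by
  rw [locF_apply]
  apply Finset.sum_eq_zero
  intro a ha
  rw [Finset.mem_filter] at ha
  rw [Psi_apply, dif_neg]
  intro hgood
  have h2 : tl ends a ∈ Iᶜ := tl_good ends I hgood a.2
  rw [ha.2] at h2
  exact h2 hv

lemma inf_eq : CycSpace k ends ⊓ LinearMap.ker (projTail k ends I) =
    (CycSpace k (subEnds ends I)).map (Psi k ends I) := by
  ext ψ
  rw [Submodule.mem_inf]
  constructor
  · rintro ⟨hc, hk⟩
    rw [LinearMap.mem_ker] at hk
    rw [mem_CycSpace_iff] at hc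
    have hI : ∀ a : E × Bool, tl ends a ∈ I → ψ a = 0 := by
      intro a ha
      have := congrFun hk a
      rwa [projTail_apply, if_pos ha, Pi.zero_apply] at this
    have hzero : ∀ e : E, ¬((ends e).1 ∈ Iᶜ ∧ (ends e).2 ∈ Iᶜ) →
        ψ (e, false) = 0 ∧ ψ (e, true) = 0 := by
      intro e hbad
      have anti := hc.2 (e, false)
      simp only [rev, Bool.not_false] at anti
      rcases not_and_or.1 hbad with h | h
      · have h1 : tl ends (e, false) ∈ I := not_not.1 h
        have hf := hI _ h1
        exact ⟨hf, by linear_combination anti - hf⟩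
      · have h1 : tl ends (e, true) ∈ I := not_not.1 h
        have ht := hI _ h1
        exact ⟨by linear_combination anti - ht, ht⟩
    have hPsi : Psi k ends I (fun a' => ψ (a'.1.1, a'.2)) = ψ := by
      funext a
      rw [Psi_apply]
      by_cases h : (ends a.1).1 ∈ Iᶜ ∧ (ends a.1).2 ∈ Iᶜ
      · rw [dif_pos h]
      · rw [dif_neg h]
        obtain ⟨e, b⟩ := a
        cases b
        · exact ((hzero e h).1).symm
        · exact ((hzero e h).2).symm
    refine ⟨fun a' => ψ (a'.1.1, a'.2), ?_, hPsi⟩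
    rw [SetLike.mem_coe, mem_CycSpace_iff]
    constructor
    · rintro ⟨v, hv⟩
      rw [← locF_Psi k ends I hv, hPsi]
      exact hc.1 v
    · intro a'
      exact hc.2 (a'.1.1, a'.2)
  · rintro ⟨ψ', hψ', rfl⟩
    rw [SetLike.mem_coe, mem_CycSpace_iff] at hψ'
    constructor
    · rw [mem_CycSpace_iff]
      constructor
      · intro v
        by_cases hv : v ∈ Iᶜ
        · rw [locF_Psi k ends I hv]
          exact hψ'.1 ⟨v, hv⟩
        · exact locF_Psi_zero k ends I (not_not.1 hv) ψ'
      · intro a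
        obtain ⟨e, b⟩ := a
        by_cases h : (ends e).1 ∈ Iᶜ ∧ (ends e).2 ∈ Iᶜ
        · rw [rev_mk, Psi_apply, Psi_apply, dif_pos h, dif_pos h]
          exact hψ'.2 (⟨e, h⟩, b)
        · rw [rev_mk, Psi_apply, Psi_apply, dif_neg h, dif_neg h, add_zero]
    · rw [LinearMap.mem_ker]
      funext a
      rw [projTail_apply, Pi.zero_apply]
      by_cases ha : tl ends a ∈ I
      · rw [if_pos ha, Psi_apply, dif_neg]
        intro hgood
        exact (tl_good ends I hgood a.2) ha
      · rw [if_neg ha]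

lemma adj_sub : adjG (subEnds ends I) = (adjG ends).induce Iᶜ := by
  ext a b
  simp only [adjG, SimpleGraph.fromRel_adj, SimpleGraph.comap_adj, Function.Embedding.coe_subtype]
  constructor
  · rintro ⟨hne, he⟩
    refine ⟨fun h => hne (Subtype.ext h), ?_⟩
    rcases he with ⟨e, he⟩ | ⟨e, he⟩
    · exact Or.inl ⟨e.1, by
        rw [Prod.ext_iff] at he
        exact Prod.ext (congrArg Subtype.val he.1) (congrArg Subtype.val he.2)⟩
    · exact Or.inr ⟨e.1, by
        rw [Prod.ext_iff] at he
        exact Prod.ext (congrArg Subtype.val he.1) (congrArg Subtype.val he.2)⟩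
  · rintro ⟨hne, he⟩
    refine ⟨fun h => hne (congrArg Subtype.val h), ?_⟩
    rcases he with ⟨e, he⟩ | ⟨e, he⟩
    · have hg : (ends e).1 ∈ Iᶜ ∧ (ends e).2 ∈ Iᶜ := by rw [he]; exact ⟨a.2, b.2⟩
      exact Or.inl ⟨⟨e, hg⟩, Prod.ext (Subtype.ext (by simp [subEnds, he])) (Subtype.ext (by simp [subEnds, he]))⟩
    · have hg : (ends e).1 ∈ Iᶜ ∧ (ends e).2 ∈ Iᶜ := by rw [he]; exact ⟨b.2, a.2⟩
      exact Or.inr ⟨⟨e, hg⟩, Prod.ext (Subtype.ext (by simp [subEnds, he])) (Subtype.ext (by simp [subEnds, he]))⟩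

end SUB


set_option synthInstance.maxHeartbeats 1000000 in
set_option maxHeartbeats 1000000 in
/-- `γ(I) = dim proj_I(𝒢) = g − g(I^c)`: the dimension of the projection of the cycle
space to the arrows with tail in `I` is the genus of `G` minus the genus of the induced
subgraph on `V \ I`. -/
theorem stmt19 (k : Type*) [Field k] (ends : E → V × V) (I : Set V) :
    (Module.finrank k ↥((CycSpace k ends).map (projTail k ends I)) : ℤ) =
      ((Fintype.card E : ℤ) - (Fintype.card V : ℤ) +
          (Nat.card (adjG ends).ConnectedComponent : ℤ)) -
        (((Finset.univ.filter fun e : E =>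
              (ends e).1 ∈ Iᶜ ∧ (ends e).2 ∈ Iᶜ).card : ℤ) -
          (Nat.card ↥Iᶜ : ℤ) +
          (Nat.card ((adjG ends).induce Iᶜ).ConnectedComponent : ℤ)) := by

  classical
  have hC := cyc_finrank k ends
  have hC' := cyc_finrank k (subEnds ends I)
  have hrn := LinearMap.finrank_range_add_finrank_ker
    ((projTail k ends I).domRestrict (CycSpace k ends))
  rw [LinearMap.range_domRestrict] at hrn
  have hker : Module.finrank k
      (LinearMap.ker ((projTail k ends I).domRestrict (CycSpace k ends))) =
      Module.finrank k (CycSpace k (subEnds ends I)) := by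
    rw [LinearMap.ker_domRestrict]
    have e1 : (LinearMap.ker (projTail k ends I)).comap (CycSpace k ends).subtype =
        (CycSpace k ends ⊓ LinearMap.ker (projTail k ends I)).comap
          (CycSpace k ends).subtype := by
      rw [Submodule.comap_inf, Submodule.comap_subtype_self, top_inf_eq]
    rw [e1]
    rw [(Submodule.comapSubtypeEquivOfLe
      (inf_le_left : CycSpace k ends ⊓ LinearMap.ker (projTail k ends I) ≤ _)).finrank_eq]
    rw [inf_eq k ends I]
    exact ((Submodule.equivMapOfInjective _ (Psi_inj k ends I) _).finrank_eq).symm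
  rw [hker] at hrn
  have hE : Fintype.card {e : E // (ends e).1 ∈ Iᶜ ∧ (ends e).2 ∈ Iᶜ} =
      (Finset.univ.filter fun e : E => (ends e).1 ∈ Iᶜ ∧ (ends e).2 ∈ Iᶜ).card :=
    Fintype.card_subtype _
  have hV : (Fintype.card ↥Iᶜ : ℤ) = (Nat.card ↥Iᶜ : ℤ) := by
    rw [Nat.card_eq_fintype_card]
  have hcc : (Nat.card (adjG (subEnds ends I)).ConnectedComponent : ℤ) =
      (Nat.card ((adjG ends).induce Iᶜ).ConnectedComponent : ℤ) := by
    rw [adj_sub]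
  rw [hE, hV, hcc] at hC'
  omega
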